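/- arXiv:1106.0912 — 5 statements merged into one kernel-verified Lean document; each statement's English description precedes it below -/
import Mathlib

section
/- For every u ∈ C²((0,∞)) and every y ∈ (0,∞): (i) A*(Au)(y) = (Hu)(y), i.e. the Hamiltonian factorizes as H = A*A; (ii) the conjugate Hamiltonian satisfies A(A*u)(y) = −u''(y) − u'(y)/y + 2(1+Z(y))·u(y)/y² = −u''(y) − u'(y)/y + 4u(y)/(y²(1+y²)). -/
open MeasureTheory Real Set

noncomputable section

/-- `Z(y) = (1-y²)/(1+y²)`. -/
def Zfun (y : ℝ) : ℝ := (1 - y ^ 2) / (1 + y ^ 2)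

/-- `V(y) = (y⁴-6y²+1)/(1+y²)²`. -/
def Vfun (y : ℝ) : ℝ := (y ^ 4 - 6 * y ^ 2 + 1) / (1 + y ^ 2) ^ 2

/-- `Au = -u' + (Z/y) u`. -/
def Aop (u : ℝ → ℝ) (y : ℝ) : ℝ := -(deriv u y) + Zfun y / y * u y

/-- `A*u = u' + ((1+Z)/y) u`. -/
def Astar (u : ℝ → ℝ) (y : ℝ) : ℝ := deriv u y + (1 + Zfun y) / y * u y

/-- The linearized Hamiltonian `Hu = -u'' - u'/y + (V/y²) u`. -/
def Hop (u : ℝ → ℝ) (y : ℝ) : ℝ :=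
  -(deriv (deriv u) y) - deriv u y / y + Vfun y / y ^ 2 * u y

/-! The first-order operators have coefficients `a = Z/y` and `b = (1+Z)/y`, so
`A*A u = -u'' + (a - b) u' + (a' + a b) u` and `AA* u = -u'' + (a - b) u' + (a b - b') u`.
Since `a - b = -1/y`, both factorizations reduce to the Riccati-type identities
`a' + a b = V/y²` and `a b - b' = 2(1+Z)/y²`, which follow from `Z' = -4y/(1+y²)²`. -/

theorem ContDiffOn.differentiableAt_deriv {𝕜 F : Type*} [NontriviallyNormedField 𝕜]
    [NormedAddCommGroup F] [NormedSpace 𝕜 F] {f : 𝕜 → F} {s : Set 𝕜} {x : 𝕜}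
    (hf : ContDiffOn 𝕜 2 f s) (hs : IsOpen s) (hx : x ∈ s) :
    DifferentiableAt 𝕜 (deriv f) x :=
  ((hf.deriv_of_isOpen hs (by norm_num)).differentiableOn one_ne_zero).differentiableAt
    (hs.mem_nhds hx)

section Coefficients

variable {y : ℝ}

theorem one_add_Zfun : 1 + Zfun y = 2 / (1 + y ^ 2) := by
  rw [Zfun]
  field_simp
  ring

theorem hasDerivAt_Zfun (y : ℝ) : HasDerivAt Zfun (-4 * y / (1 + y ^ 2) ^ 2) y := by
  have hnum : HasDerivAt (fun t : ℝ => 1 - t ^ 2) (-(2 * y)) y := by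
    simpa using (hasDerivAt_pow 2 y).const_sub 1
  have hden : HasDerivAt (fun t : ℝ => 1 + t ^ 2) (2 * y) y := by
    simpa using (hasDerivAt_pow 2 y).const_add 1
  refine (hnum.div hden (by positivity)).congr_deriv ?_
  ring

theorem hasDerivAt_Zfun_div (hy : y ≠ 0) :
    HasDerivAt (fun t => Zfun t / t) (-4 / (1 + y ^ 2) ^ 2 - Zfun y / y ^ 2) y := by
  refine ((hasDerivAt_Zfun y).div (hasDerivAt_id' y) hy).congr_deriv ?_
  field_simp

theorem hasDerivAt_one_add_Zfun_div (hy : y ≠ 0) :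
    HasDerivAt (fun t => (1 + Zfun t) / t)
      (-4 / (1 + y ^ 2) ^ 2 - (1 + Zfun y) / y ^ 2) y := by
  refine (((hasDerivAt_Zfun y).const_add 1).div (hasDerivAt_id' y) hy).congr_deriv ?_
  field_simp

theorem Vfun_div_sq_eq (hy : y ≠ 0) :
    Vfun y / y ^ 2
      = (-4 / (1 + y ^ 2) ^ 2 - Zfun y / y ^ 2) + (1 + Zfun y) / y * (Zfun y / y) := by
  rw [Vfun, Zfun]
  field_simp
  ring

theorem conjugate_potential_eq (hy : y ≠ 0) :
    Zfun y / y * ((1 + Zfun y) / y) - (-4 / (1 + y ^ 2) ^ 2 - (1 + Zfun y) / y ^ 2)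
      = 2 * (1 + Zfun y) / y ^ 2 := by
  rw [Zfun]
  field_simp
  ring

end Coefficients

section Operators

variable {u : ℝ → ℝ} {y : ℝ}

theorem hasDerivAt_Aop (hu : DifferentiableAt ℝ u y)
    (hu' : DifferentiableAt ℝ (deriv u) y) (hy : y ≠ 0) :
    HasDerivAt (Aop u)
      (-deriv (deriv u) y
        + ((-4 / (1 + y ^ 2) ^ 2 - Zfun y / y ^ 2) * u y + Zfun y / y * deriv u y)) y :=
  hu'.hasDerivAt.neg.add ((hasDerivAt_Zfun_div hy).mul hu.hasDerivAt)

theorem hasDerivAt_Astar (hu : DifferentiableAt ℝ u y)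
    (hu' : DifferentiableAt ℝ (deriv u) y) (hy : y ≠ 0) :
    HasDerivAt (Astar u)
      (deriv (deriv u) y
        + ((-4 / (1 + y ^ 2) ^ 2 - (1 + Zfun y) / y ^ 2) * u y
          + (1 + Zfun y) / y * deriv u y)) y :=
  hu'.hasDerivAt.add ((hasDerivAt_one_add_Zfun_div hy).mul hu.hasDerivAt)

theorem Astar_Aop (hu : DifferentiableAt ℝ u y) (hu' : DifferentiableAt ℝ (deriv u) y)
    (hy : y ≠ 0) : Astar (Aop u) y = Hop u y := by
  rw [Astar, (hasDerivAt_Aop hu hu' hy).deriv, Hop, Aop]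
  linear_combination -u y * Vfun_div_sq_eq hy

theorem Aop_Astar (hu : DifferentiableAt ℝ u y) (hu' : DifferentiableAt ℝ (deriv u) y)
    (hy : y ≠ 0) :
    Aop (Astar u) y
      = -deriv (deriv u) y - deriv u y / y + 2 * (1 + Zfun y) * u y / y ^ 2 := by
  rw [Aop, (hasDerivAt_Astar hu hu' hy).deriv, Astar]
  linear_combination u y * conjugate_potential_eq hy

end Operators

/-- Factorization of the Hamiltonian: `H = A*A`, and the conjugate Hamiltonian
`AA*u = -u'' - u'/y + 2(1+Z)u/y² = -u'' - u'/y + 4u/(y²(1+y²))`. -/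
theorem hamiltonian_factorization (u : ℝ → ℝ)
    (hu : ContDiffOn ℝ 2 u (Set.Ioi 0)) :
    ∀ y : ℝ, 0 < y →
      (Astar (Aop u) y = Hop u y) ∧
      (Aop (Astar u) y
        = -(deriv (deriv u) y) - deriv u y / y + 2 * (1 + Zfun y) * u y / y ^ 2) ∧
      (Aop (Astar u) y
        = -(deriv (deriv u) y) - deriv u y / y + 4 * u y / (y ^ 2 * (1 + y ^ 2))) := by
  intro y hy
  have hu₁ : DifferentiableAt ℝ u y :=
    (hu.differentiableOn two_ne_zero).differentiableAt (isOpen_Ioi.mem_nhds hy)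
  have hu₂ : DifferentiableAt ℝ (deriv u) y := hu.differentiableAt_deriv isOpen_Ioi hy
  have hAA := Aop_Astar hu₁ hu₂ hy.ne'
  refine ⟨Astar_Aop hu₁ hu₂ hy.ne', hAA, ?_⟩
  rw [hAA, one_add_Zfun]
  field_simp
  ring
end
end

section
/- The function Γ(y) = Λφ(y)·∫₁^y dx/(x·Λφ(x)²) satisfies HΓ = 0 on (0,∞). Moreover there is a constant C > 0 such that |Γ(y) − y/4| ≤ C·(log y)/y for all y ≥ 2, and |Γ(y)| ≤ C/y for all 0 < y ≤ 1. -/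
open MeasureTheory Real Set

noncomputable section

/-- `Λφ(y) = 2y/(1+y²)`. -/
def Lphi (y : ℝ) : ℝ := 2 * y / (1 + y ^ 2)

/-- The second (singular) element of the kernel of `H`:
`Γ(y) = Λφ(y)·∫₁^y dx/(x·Λφ(x)²)`. -/
def Gam (y : ℝ) : ℝ := Lphi y * ∫ x in (1:ℝ)..y, 1 / (x * (Lphi x) ^ 2)

/-!
`Λφ` is the regular element of the kernel: `HΛφ = 0` is a rational identity. Reduction of order
gives the second one: if `w' = 1/(x φ²)` then `H(φ w) = w · Hφ`, since the remaining terms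
`2φ'w' + φw'' + φw'/x = (x φ² w')'/(x φ)` vanish.
The integral is elementary, `1/(x Λφ²) = x/4 + 1/(2x) + 1/(4x³)`, so
`Γ(y) = y/4 - 1/(4y) + y log y/(1+y²)`, and both bounds hold with `C = 1`.
-/

open Filter Topology

lemma Hop_congr {u v : ℝ → ℝ} {y : ℝ} (h : u =ᶠ[𝓝 y] v) : Hop u y = Hop v y := by
  simp only [Hop, h.deriv.deriv_eq, h.deriv_eq, h.eq_of_nhds]

lemma Hop_mul_eq_mul_Hop {φ φ' w : ℝ → ℝ} {y : ℝ} (hy : y ≠ 0) (hφy : φ y ≠ 0)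
    (hφ : ∀ᶠ x in 𝓝 y, HasDerivAt φ (φ' x) x) (hφ' : DifferentiableAt ℝ φ' y)
    (hw : ∀ᶠ x in 𝓝 y, HasDerivAt w (1 / (x * φ x ^ 2)) x) :
    Hop (fun x => φ x * w x) y = w y * Hop φ y := by
  have hderiv : deriv (fun x => φ x * w x) =ᶠ[𝓝 y]
      fun x => φ' x * w x + φ x * (1 / (x * φ x ^ 2)) := by
    filter_upwards [hφ, hw] with x hφx hwx using (hφx.mul hwx).deriv
  have hderiv_φ : deriv φ =ᶠ[𝓝 y] φ' := by
    filter_upwards [hφ] with x hφx using hφx.deriv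
  have hφy' := hφ.self_of_nhds
  have hwy := hw.self_of_nhds
  have hsecond : HasDerivAt (fun x => φ' x * w x + φ x * (1 / (x * φ x ^ 2)))
      (deriv φ' y * w y + φ' y * (1 / (y * φ y ^ 2)) +
        (φ' y * (1 / (y * φ y ^ 2)) +
          φ y * (-(1 * φ y ^ 2 + y * (2 * φ y * φ' y)) / (y * φ y ^ 2) ^ 2))) y := by
    refine (hφ'.hasDerivAt.mul hwy).add (hφy'.mul ?_)
    have hsq : HasDerivAt (fun x => φ x ^ 2) (2 * φ y * φ' y) y := by
      simpa [mul_comm] using hφy'.fun_pow 2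
    simpa only [one_div] using
      ((hasDerivAt_id' y).fun_mul hsq).fun_inv (mul_ne_zero hy (pow_ne_zero 2 hφy))
  simp only [Hop, hderiv.deriv_eq, hderiv_φ.deriv_eq, hsecond.deriv, hderiv.eq_of_nhds,
    hφy'.deriv]
  field_simp
  ring

lemma hasDerivAt_Lphi (x : ℝ) : HasDerivAt Lphi (2 * (1 - x ^ 2) / (1 + x ^ 2) ^ 2) x := by
  have h : HasDerivAt (fun x : ℝ => 2 * x / (1 + x ^ 2)) _ x :=
    ((hasDerivAt_id' x).const_mul 2).fun_div ((hasDerivAt_pow 2 x).const_add 1)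
      (by positivity)
  exact h.congr_deriv (by field_simp; ring)

lemma hasDerivAt_deriv_Lphi (x : ℝ) :
    HasDerivAt (fun x : ℝ => 2 * (1 - x ^ 2) / (1 + x ^ 2) ^ 2)
      (4 * x * (x ^ 2 - 3) / (1 + x ^ 2) ^ 3) x := by
  have h := (((hasDerivAt_pow 2 x).const_sub 1).const_mul 2).fun_div
    (((hasDerivAt_pow 2 x).const_add 1).fun_pow 2) (by positivity)
  exact h.congr_deriv (by field_simp; ring)

lemma Hop_Lphi {y : ℝ} (hy : y ≠ 0) : Hop Lphi y = 0 := by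
  have hderiv : deriv Lphi = fun x => 2 * (1 - x ^ 2) / (1 + x ^ 2) ^ 2 :=
    funext fun x => (hasDerivAt_Lphi x).deriv
  simp only [Hop, hderiv, (hasDerivAt_deriv_Lphi y).deriv, Vfun, Lphi]
  field_simp
  ring

def gamIntegral (y : ℝ) : ℝ := y ^ 2 / 8 - 1 / (8 * y ^ 2) + log y / 2

lemma hasDerivAt_gamIntegral {x : ℝ} (hx : x ≠ 0) :
    HasDerivAt gamIntegral (1 / (x * Lphi x ^ 2)) x := by
  have hsq : HasDerivAt (fun x : ℝ => x ^ 2) (2 * x) x := by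
    simpa using hasDerivAt_pow 2 x
  have h : HasDerivAt (fun x => x ^ 2 / 8 - 1 / (8 * x ^ 2) + log x / 2) _ x :=
    ((hsq.div_const 8).sub (by simpa only [one_div] using
      (hsq.const_mul 8).fun_inv (by positivity))).add ((hasDerivAt_log hx).div_const 2)
  exact h.congr_deriv (by simp only [Lphi]; field_simp; ring)

lemma continuousOn_inv_mul_Lphi_sq :
    ContinuousOn (fun x => 1 / (x * Lphi x ^ 2)) (Ioi 0) := by
  have hLphi : Continuous Lphi :=
    continuous_iff_continuousAt.2 fun x => (hasDerivAt_Lphi x).continuousAt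
  refine continuousOn_const.div (by fun_prop) fun x (hx : 0 < x) => ?_
  have : 0 < Lphi x := by unfold Lphi; positivity
  positivity

lemma integral_inv_mul_Lphi_sq {y : ℝ} (hy : 0 < y) :
    ∫ x in (1 : ℝ)..y, 1 / (x * Lphi x ^ 2) = gamIntegral y := by
  have hsub : uIcc 1 y ⊆ Ioi 0 := fun x hx => lt_of_lt_of_le (lt_min one_pos hy) hx.1
  rw [intervalIntegral.integral_eq_sub_of_hasDerivAt
    (fun x hx => hasDerivAt_gamIntegral (hsub hx).ne')
    ((continuousOn_inv_mul_Lphi_sq.mono hsub).intervalIntegrable)]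
  simp [gamIntegral]

lemma Gam_eventuallyEq {y : ℝ} (hy : 0 < y) :
    Gam =ᶠ[𝓝 y] fun x => Lphi x * gamIntegral x := by
  filter_upwards [Ioi_mem_nhds hy] with x hx
  rw [Gam, integral_inv_mul_Lphi_sq hx]

lemma Hop_Gam {y : ℝ} (hy : 0 < y) : Hop Gam y = 0 := by
  rw [Hop_congr (Gam_eventuallyEq hy),
    Hop_mul_eq_mul_Hop hy.ne' (by unfold Lphi; positivity)
      (Eventually.of_forall hasDerivAt_Lphi) (hasDerivAt_deriv_Lphi y).differentiableAt
      (eventually_ne_nhds hy.ne' |>.mono fun x hx => hasDerivAt_gamIntegral hx),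
    Hop_Lphi hy.ne', mul_zero]

lemma Gam_eq {y : ℝ} (hy : 0 < y) :
    Gam y = y / 4 - 1 / (4 * y) + y * log y / (1 + y ^ 2) := by
  rw [(Gam_eventuallyEq hy).eq_of_nhds, Lphi, gamIntegral]
  field_simp
  ring

lemma abs_Gam_sub_le {y : ℝ} (hy : 2 ≤ y) : |Gam y - y / 4| ≤ log y / y := by
  have hy0 : 0 < y := by linarith
  have hlog : 1 / 4 ≤ log y := by
    linarith [log_two_gt_d9, log_le_log two_pos hy]
  have hinv : 1 / (4 * y) ≤ log y / y := by
    rw [div_le_div_iff₀ (by positivity) hy0]; nlinarith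
  have hlog_term : y * log y / (1 + y ^ 2) ≤ log y / y := by
    rw [div_le_div_iff₀ (by positivity) hy0]; nlinarith
  have hinv_nonneg : 0 ≤ 1 / (4 * y) := by positivity
  have hlog_term_nonneg : 0 ≤ y * log y / (1 + y ^ 2) := by positivity
  rw [Gam_eq hy0, abs_le]
  constructor <;> linarith

lemma abs_Gam_le {y : ℝ} (hy0 : 0 < y) (hy1 : y ≤ 1) : |Gam y| ≤ 1 / y := by
  -- `y log y ≥ y - 1` makes `y Γ(y) = (y² - 1)/4 + y² log y/(1+y²)` lie in `[-1/2, 0]`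
  have hlog : y - 1 ≤ y * log y := by
    have := mul_le_mul_of_nonneg_left (one_sub_inv_le_log_of_pos hy0) hy0.le
    rwa [mul_sub, mul_one, mul_inv_cancel₀ hy0.ne'] at this
  have hlog_nonpos : log y ≤ 0 := log_nonpos hy0.le hy1
  have hyΓ : y * Gam y = (y ^ 2 - 1) / 4 + y * (y * log y) / (1 + y ^ 2) := by
    rw [Gam_eq hy0]; field_simp
  have hupper : y * (y * log y) / (1 + y ^ 2) ≤ 0 :=
    div_nonpos_of_nonpos_of_nonneg
      (mul_nonpos_of_nonneg_of_nonpos hy0.le (mul_nonpos_of_nonneg_of_nonpos hy0.le hlog_nonpos))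
      (by positivity)
  have hlower : -(1 / 4) ≤ y * (y * log y) / (1 + y ^ 2) := by
    rw [le_div_iff₀ (by positivity)]
    nlinarith [mul_le_mul_of_nonneg_left hlog hy0.le, sq_nonneg (y - 1 / 2)]
  rw [← mul_div_cancel_left₀ (Gam y) hy0.ne', abs_div, abs_of_pos hy0]
  exact div_le_div_of_nonneg_right (abs_le.2 ⟨by nlinarith, by nlinarith⟩) hy0.le

/-- `HΓ = 0` on `(0,∞)`; moreover `Γ(y) = y/4 + O(log y / y)` as `y → ∞` and
`Γ(y) = O(1/y)` as `y → 0`. -/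
theorem Gam_kernel_and_asymptotics :
    (∀ y : ℝ, 0 < y → Hop Gam y = 0) ∧
    ∃ C : ℝ, 0 < C ∧
      (∀ y : ℝ, 2 ≤ y → |Gam y - y / 4| ≤ C * Real.log y / y) ∧
      (∀ y : ℝ, 0 < y → y ≤ 1 → |Gam y| ≤ C / y) := by
  refine ⟨fun y hy => Hop_Gam hy, 1, one_pos, fun y hy => ?_, fun y hy0 hy1 => ?_⟩
  · simpa using abs_Gam_sub_le hy
  · exact abs_Gam_le hy0 hy1
end
end

section
/- (Logarithmic Hardy inequality.) There exists a universal constant C > 0 such that for every R > 2 and every radially symmetric v ∈ Ḣ¹(ℝ²), represented by a C¹ function v of the radial variable y with ∫₀^∞ |v'(y)|² y dy < ∞: ∫₀^R |v(y)|²/(y²(1+|log y|)²) · y dy ≤ C·( ∫₁² |v(y)|² y dy + ∫₀^R |v'(y)|² y dy ). -/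
/-!
If `G' = G² / y`, then `v² G² / y ≤ 2 (v² G)' + 4 v'² y`, the difference being
`(v G + 2 y v')² / y`. The solutions `G = 1 / (c - log y)` with `c = 1` on `[ε, 1]` and
`c = -1` on `[1, R]` give boundary terms of the right sign at `ε` and `R`, so both pieces of the
weighted integral are bounded by `2 v(1)²` plus four times the Dirichlet energy, and monotone
convergence lets `ε → 0`. Finally `v(1)² = ∫₁² ((t - 2) v(t)²)' dt ≤ ∫₁² (2 v² + v'²) t dt`.
-/

open MeasureTheory Real Set

open Filter Topology in
theorem integrableOn_Ioc_and_setIntegral_le_of_forall_setIntegral_Ioc_le {f : ℝ → ℝ}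
    {a b M : ℝ} (hab : a < b) (hf : ContinuousOn f (Ioc a b)) (hf0 : ∀ y ∈ Ioc a b, 0 ≤ f y)
    (hM : ∀ ε ∈ Ioo a b, ∫ y in Ioc ε b, f y ≤ M) :
    IntegrableOn f (Ioc a b) ∧ ∫ y in Ioc a b, f y ≤ M := by
  have hmeas : AEStronglyMeasurable f (volume.restrict (Ioc a b)) :=
    hf.aestronglyMeasurable measurableSet_Ioc
  have hnonneg : 0 ≤ᵐ[volume.restrict (Ioc a b)] f :=
    ae_restrict_of_forall_mem measurableSet_Ioc hf0
  have hcover : AECover (volume.restrict (Ioc a b)) (𝓝[>] a) (fun ε => Ioc ε b) :=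
    aecover_Ioc_of_Ioc (tendsto_id.mono_left nhdsWithin_le_nhds) tendsto_const_nhds
  have hbound : ∫⁻ y in Ioc a b, ENNReal.ofReal (f y) ≤ ENNReal.ofReal M := by
    refine le_of_tendsto (hcover.lintegral_tendsto_of_countably_generated
      hmeas.aemeasurable.ennreal_ofReal) ?_
    filter_upwards [Ioo_mem_nhdsGT hab] with ε hε
    have hsub : Ioc ε b ⊆ Ioc a b := Ioc_subset_Ioc_left hε.1.le
    rw [Measure.restrict_restrict measurableSet_Ioc, inter_eq_left.2 hsub,
      ← ofReal_integral_eq_lintegral_ofReal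
        ((hf.mono (Icc_subset_Ioc hε.1 le_rfl)).integrableOn_Icc.mono_set Ioc_subset_Icc_self)
        (ae_restrict_of_forall_mem measurableSet_Ioc fun y hy => hf0 y (hsub hy))]
    exact ENNReal.ofReal_le_ofReal (hM ε hε)
  have hM0 : 0 ≤ M := by
    obtain ⟨ε, hε⟩ := nonempty_Ioo.2 hab
    exact (setIntegral_nonneg measurableSet_Ioc fun y hy =>
      hf0 y (Ioc_subset_Ioc_left hε.1.le hy)).trans (hM ε hε)
  refine ⟨⟨hmeas, (hasFiniteIntegral_iff_ofReal hnonneg).2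
    (hbound.trans_lt ENNReal.ofReal_lt_top)⟩, ?_⟩
  rw [integral_eq_lintegral_of_nonneg_ae hnonneg hmeas]
  exact ENNReal.toReal_le_of_le_ofReal hM0 hbound

section WeightedHardy

variable {v v' : ℝ → ℝ}

theorem integral_sq_mul_sq_div_le_of_hasDerivAt {G : ℝ → ℝ} {a b : ℝ} (ha : 0 < a)
    (hab : a ≤ b) (hv : ∀ y ∈ Icc a b, HasDerivAt v (v' y) y)
    (hv' : ContinuousOn v' (Icc a b)) (hG : ∀ y ∈ Icc a b, HasDerivAt G (G y ^ 2 / y) y) :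
    ∫ y in a..b, v y ^ 2 * (G y ^ 2 / y) ≤
      2 * (v b ^ 2 * G b - v a ^ 2 * G a) + 4 * ∫ y in a..b, v' y ^ 2 * y := by
  have hpos : ∀ y ∈ Icc a b, 0 < y := fun y hy => ha.trans_le hy.1
  have hvc : ContinuousOn v (Icc a b) := fun y hy => (hv y hy).continuousAt.continuousWithinAt
  have hGc : ContinuousOn G (Icc a b) := fun y hy => (hG y hy).continuousAt.continuousWithinAt
  have hweighted : ContinuousOn (fun y => v y ^ 2 * (G y ^ 2 / y)) (Icc a b) :=
    (hvc.pow 2).mul ((hGc.pow 2).div continuousOn_id fun y hy => (hpos y hy).ne')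
  have hkinetic : ContinuousOn (fun y => v' y ^ 2 * y) (Icc a b) :=
    (hv'.pow 2).mul continuousOn_id
  have hderiv : ∀ y ∈ Icc a b, HasDerivAt (fun y => v y ^ 2 * G y)
      (2 * v y * v' y * G y + v y ^ 2 * (G y ^ 2 / y)) y := fun y hy =>
    (((hv y hy).pow 2).mul (hG y hy)).congr_deriv (by simp only [Pi.pow_apply]; push_cast; ring)
  have hpointwise : ∀ y ∈ Ioo a b,
      -(2 * (2 * v y * v' y * G y + v y ^ 2 * (G y ^ 2 / y))) ≤
        4 * (v' y ^ 2 * y) - v y ^ 2 * (G y ^ 2 / y) := fun y hy => by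
    have hy := hpos y (Ioo_subset_Icc_self hy)
    have hsq : 0 ≤ (v y * G y + 2 * y * v' y) ^ 2 / y := by positivity
    have hid : 4 * (v' y ^ 2 * y) - v y ^ 2 * (G y ^ 2 / y) +
        2 * (2 * v y * v' y * G y + v y ^ 2 * (G y ^ 2 / y)) =
        (v y * G y + 2 * y * v' y) ^ 2 / y := by
      field_simp
      ring
    linarith
  have hbound := intervalIntegral.sub_le_integral_of_hasDeriv_right_of_le hab
    (g := fun y => -(2 * (v y ^ 2 * G y)))
    (φ := fun y => 4 * (v' y ^ 2 * y) - v y ^ 2 * (G y ^ 2 / y))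
    (((hvc.pow 2).mul hGc).const_mul 2).neg
    (fun y hy => (((hderiv y (Ioo_subset_Icc_self hy)).const_mul 2).neg).hasDerivWithinAt)
    ((hkinetic.const_mul 4).sub hweighted).integrableOn_Icc hpointwise
  rw [intervalIntegral.integral_sub
      (ContinuousOn.intervalIntegrable_of_Icc hab (hkinetic.const_mul 4))
      (ContinuousOn.intervalIntegrable_of_Icc hab hweighted),
    intervalIntegral.integral_const_mul] at hbound
  linarith

theorem integral_sq_div_sq_mul_sub_log_sq_le {a b c : ℝ} (ha : 0 < a) (hab : a ≤ b)
    (hc : ∀ y ∈ Icc a b, log y ≠ c) (hv : ∀ y ∈ Icc a b, HasDerivAt v (v' y) y)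
    (hv' : ContinuousOn v' (Icc a b)) :
    ∫ y in a..b, v y ^ 2 / (y ^ 2 * (c - log y) ^ 2) * y ≤
      2 * (v b ^ 2 / (c - log b) - v a ^ 2 / (c - log a)) + 4 * ∫ y in a..b, v' y ^ 2 * y := by
  have hG : ∀ y ∈ Icc a b,
      HasDerivAt (fun y => (c - log y)⁻¹) ((c - log y)⁻¹ ^ 2 / y) y := by
    intro y hy
    have hlog := sub_ne_zero.2 (hc y hy).symm
    refine (((hasDerivAt_log (ha.trans_le hy.1).ne').const_sub c).inv hlog).congr_deriv ?_
    field_simp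
  calc ∫ y in a..b, v y ^ 2 / (y ^ 2 * (c - log y) ^ 2) * y
      = ∫ y in a..b, v y ^ 2 * ((c - log y)⁻¹ ^ 2 / y) := by
        refine intervalIntegral.integral_congr fun y hy => ?_
        rw [uIcc_of_le hab] at hy
        have hy0 := (ha.trans_le hy.1).ne'
        field_simp
    _ ≤ _ := by
        simpa only [div_eq_mul_inv] using
          integral_sq_mul_sq_div_le_of_hasDerivAt ha hab hv hv' hG

theorem sq_one_le_setIntegral_Ioc_one_two (hv : ∀ y ∈ Icc (1 : ℝ) 2, HasDerivAt v (v' y) y)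
    (hv' : ContinuousOn v' (Icc 1 2)) :
    v 1 ^ 2 ≤ 2 * (∫ y in Ioc 1 2, v y ^ 2 * y) + ∫ y in Ioc 1 2, v' y ^ 2 * y := by
  rw [← intervalIntegral.integral_of_le one_le_two, ← intervalIntegral.integral_of_le one_le_two]
  have hvc : ContinuousOn v (Icc 1 2) := fun y hy => (hv y hy).continuousAt.continuousWithinAt
  have hpotential : ContinuousOn (fun y => v y ^ 2 * y) (Icc 1 2) :=
    (hvc.pow 2).mul continuousOn_id
  have hkinetic : ContinuousOn (fun y => v' y ^ 2 * y) (Icc 1 2) :=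
    (hv'.pow 2).mul continuousOn_id
  have hbound := intervalIntegral.sub_le_integral_of_hasDeriv_right_of_le one_le_two
    (g := fun t => (t - 2) * v t ^ 2) (g' := fun t => v t ^ 2 + (t - 2) * (2 * v t * v' t))
    (φ := fun t => 2 * (v t ^ 2 * t) + v' t ^ 2 * t)
    ((continuousOn_id.sub continuousOn_const).mul (hvc.pow 2))
    (fun t ht => (((hasDerivAt_id t).sub_const 2).mul ((hv t (Ioo_subset_Icc_self ht)).pow 2)
      |>.congr_deriv (by simp only [id, Pi.pow_apply]; push_cast; ring)).hasDerivWithinAt)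
    ((hpotential.const_mul 2).add hkinetic).integrableOn_Icc
    (fun t ht => by
      have h1 : 0 ≤ t - 1 := by linarith [ht.1]
      have h5 : 0 ≤ 5 - t := by linarith [ht.2]
      nlinarith [sq_nonneg ((t - 2) * v t - v' t), mul_nonneg (sq_nonneg (v' t)) h1,
        mul_nonneg (sq_nonneg (v t)) (mul_nonneg h1 h5)])
  rw [intervalIntegral.integral_add
      (ContinuousOn.intervalIntegrable_of_Icc one_le_two (hpotential.const_mul 2))
      (ContinuousOn.intervalIntegrable_of_Icc one_le_two hkinetic),
    intervalIntegral.integral_const_mul] at hbound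
  linarith

theorem continuousOn_sq_div_sq_mul_one_add_abs_log_sq {s : Set ℝ} (hv : ContinuousOn v s)
    (hs : s ⊆ Ioi 0) :
    ContinuousOn (fun y => v y ^ 2 / (y ^ 2 * (1 + |log y|) ^ 2) * y) s := by
  have hlog : ContinuousOn log s := continuousOn_log.mono fun y hy => (hs hy).ne'
  refine ((hv.pow 2).div ((continuousOn_pow 2).mul ((continuousOn_const.add hlog.abs).pow 2))
    fun y hy => ?_).mul continuousOn_id
  have : 0 < y := hs hy
  show y ^ 2 * (1 + |log y|) ^ 2 ≠ 0
  positivity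

theorem setIntegral_Ioc_sq_div_sq_mul_one_add_abs_log_sq_le_of_le_one {ε : ℝ} (hε : 0 < ε)
    (hε1 : ε ≤ 1) (hv : ∀ y ∈ Icc ε 1, HasDerivAt v (v' y) y)
    (hv' : ContinuousOn v' (Icc ε 1)) :
    ∫ y in Ioc ε 1, v y ^ 2 / (y ^ 2 * (1 + |log y|) ^ 2) * y ≤
      2 * v 1 ^ 2 + 4 * ∫ y in Ioc ε 1, v' y ^ 2 * y := by
  have hlog : ∀ y ∈ Icc ε 1, log y ≤ 0 := fun y hy => log_nonpos (hε.trans_le hy.1).le hy.2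
  rw [← intervalIntegral.integral_of_le hε1, ← intervalIntegral.integral_of_le hε1]
  calc ∫ y in ε..1, v y ^ 2 / (y ^ 2 * (1 + |log y|) ^ 2) * y
      = ∫ y in ε..1, v y ^ 2 / (y ^ 2 * (1 - log y) ^ 2) * y := by
        refine intervalIntegral.integral_congr fun y hy => ?_
        rw [uIcc_of_le hε1] at hy
        rw [abs_of_nonpos (hlog y hy), ← sub_eq_add_neg]
    _ ≤ 2 * (v 1 ^ 2 / (1 - log 1) - v ε ^ 2 / (1 - log ε)) +
          4 * ∫ y in ε..1, v' y ^ 2 * y :=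
        integral_sq_div_sq_mul_sub_log_sq_le hε hε1 (fun y hy => by linarith [hlog y hy]) hv hv'
    _ ≤ 2 * v 1 ^ 2 + 4 * ∫ y in ε..1, v' y ^ 2 * y := by
        have : 0 ≤ v ε ^ 2 / (1 - log ε) :=
          div_nonneg (sq_nonneg _) (by linarith [hlog ε ⟨le_rfl, hε1⟩])
        rw [log_one, sub_zero, div_one]
        linarith

theorem setIntegral_Ioc_one_sq_div_sq_mul_one_add_abs_log_sq_le {R : ℝ} (hR : 1 ≤ R)
    (hv : ∀ y ∈ Icc 1 R, HasDerivAt v (v' y) y) (hv' : ContinuousOn v' (Icc 1 R)) :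
    ∫ y in Ioc 1 R, v y ^ 2 / (y ^ 2 * (1 + |log y|) ^ 2) * y ≤
      2 * v 1 ^ 2 + 4 * ∫ y in Ioc 1 R, v' y ^ 2 * y := by
  have hlog : ∀ y ∈ Icc 1 R, 0 ≤ log y := fun y hy => log_nonneg hy.1
  rw [← intervalIntegral.integral_of_le hR, ← intervalIntegral.integral_of_le hR]
  calc ∫ y in (1 : ℝ)..R, v y ^ 2 / (y ^ 2 * (1 + |log y|) ^ 2) * y
      = ∫ y in (1 : ℝ)..R, v y ^ 2 / (y ^ 2 * (-1 - log y) ^ 2) * y := by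
        refine intervalIntegral.integral_congr fun y hy => ?_
        rw [uIcc_of_le hR] at hy
        rw [abs_of_nonneg (hlog y hy)]
        ring
    _ ≤ 2 * (v R ^ 2 / (-1 - log R) - v 1 ^ 2 / (-1 - log 1)) +
          4 * ∫ y in (1 : ℝ)..R, v' y ^ 2 * y :=
        integral_sq_div_sq_mul_sub_log_sq_le one_pos hR (fun y hy => by linarith [hlog y hy])
          hv hv'
    _ ≤ 2 * v 1 ^ 2 + 4 * ∫ y in (1 : ℝ)..R, v' y ^ 2 * y := by
        have : v R ^ 2 / (-1 - log R) ≤ 0 :=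
          div_nonpos_of_nonneg_of_nonpos (sq_nonneg _) (by linarith [hlog R ⟨hR, le_rfl⟩])
        rw [log_one, sub_zero, div_neg, div_one]
        linarith

theorem integrableOn_Ioc_zero_one_and_setIntegral_sq_div_sq_mul_one_add_abs_log_sq_le
    (hv : ∀ y ∈ Ioc 0 1, HasDerivAt v (v' y) y) (hv' : ContinuousOn v' (Ioc 0 1))
    (hkinetic : IntegrableOn (fun y => v' y ^ 2 * y) (Ioc 0 1)) :
    IntegrableOn (fun y => v y ^ 2 / (y ^ 2 * (1 + |log y|) ^ 2) * y) (Ioc 0 1) ∧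
      ∫ y in Ioc 0 1, v y ^ 2 / (y ^ 2 * (1 + |log y|) ^ 2) * y ≤
        2 * v 1 ^ 2 + 4 * ∫ y in Ioc 0 1, v' y ^ 2 * y := by
  refine integrableOn_Ioc_and_setIntegral_le_of_forall_setIntegral_Ioc_le one_pos
    (continuousOn_sq_div_sq_mul_one_add_abs_log_sq
      (fun y hy => (hv y hy).continuousAt.continuousWithinAt) Ioc_subset_Ioi_self)
    (fun y hy => by have := hy.1; positivity) fun ε hε => ?_
  have hsub : Icc ε 1 ⊆ Ioc 0 1 := Icc_subset_Ioc hε.1 le_rfl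
  have hkinetic_mono := setIntegral_mono_set hkinetic
    (ae_restrict_of_forall_mem measurableSet_Ioc fun y hy => by have := hy.1; positivity)
    (Ioc_subset_Ioc_left hε.1.le).eventuallyLE
  have := setIntegral_Ioc_sq_div_sq_mul_one_add_abs_log_sq_le_of_le_one hε.1 hε.2.le
    (fun y hy => hv y (hsub hy)) (hv'.mono hsub)
  linarith

theorem setIntegral_Ioc_zero_sq_div_sq_mul_one_add_abs_log_sq_le {R : ℝ} (hR : 1 ≤ R)
    (hv : ∀ y ∈ Ioc 0 R, HasDerivAt v (v' y) y) (hv' : ContinuousOn v' (Ioc 0 R))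
    (hkinetic : IntegrableOn (fun y => v' y ^ 2 * y) (Ioc 0 R)) :
    ∫ y in Ioc 0 R, v y ^ 2 / (y ^ 2 * (1 + |log y|) ^ 2) * y ≤
      4 * v 1 ^ 2 + 4 * ∫ y in Ioc 0 R, v' y ^ 2 * y := by
  have hsplit : ∀ f : ℝ → ℝ, IntegrableOn f (Ioc 0 1) → IntegrableOn f (Ioc 1 R) →
      ∫ y in Ioc 0 R, f y = (∫ y in Ioc 0 1, f y) + ∫ y in Ioc 1 R, f y := fun f h01 h1R => by
    rw [← Ioc_union_Ioc_eq_Ioc zero_le_one hR,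
      setIntegral_union (Ioc_disjoint_Ioc_of_le le_rfl) measurableSet_Ioc h01 h1R]
  have hsub01 : Ioc 0 1 ⊆ Ioc 0 R := Ioc_subset_Ioc_right hR
  have hsub1R : Icc 1 R ⊆ Ioc 0 R := Icc_subset_Ioc one_pos le_rfl
  obtain ⟨hint01, h01⟩ :=
    integrableOn_Ioc_zero_one_and_setIntegral_sq_div_sq_mul_one_add_abs_log_sq_le
      (fun y hy => hv y (hsub01 hy)) (hv'.mono hsub01) (hkinetic.mono_set hsub01)
  have h1R := setIntegral_Ioc_one_sq_div_sq_mul_one_add_abs_log_sq_le hR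
    (fun y hy => hv y (hsub1R hy)) (hv'.mono hsub1R)
  have hint1R := (continuousOn_sq_div_sq_mul_one_add_abs_log_sq
    (fun y hy => (hv y (hsub1R hy)).continuousAt.continuousWithinAt)
    (hsub1R.trans Ioc_subset_Ioi_self)).integrableOn_Icc (μ := volume) |>.mono_set
      Ioc_subset_Icc_self
  rw [hsplit _ hint01 hint1R, hsplit _ (hkinetic.mono_set hsub01)
    (hkinetic.mono_set (Ioc_subset_Icc_self.trans hsub1R))]
  linarith

end WeightedHardy

/-- Logarithmic Hardy inequality: there is a universal `C > 0` such that for every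
`R > 2` and every radially symmetric `v ∈ Ḣ¹(ℝ²)`, represented by a `C¹` function of
the radial variable with `∫₀^∞ (v')² y dy < ∞`,
`∫₀^R v²/(y²(1+|log y|)²) y dy ≤ C (∫₁² v² y dy + ∫₀^R (v')² y dy)`. -/
theorem log_hardy_inequality :
    ∃ C : ℝ, 0 < C ∧
      ∀ R : ℝ, 2 < R → ∀ v : ℝ → ℝ,
        ContDiffOn ℝ 1 v (Set.Ioi 0) →
        IntegrableOn (fun y => (deriv v y) ^ 2 * y) (Set.Ioi 0) →
        (∫ y in Set.Ioc (0:ℝ) R, (v y) ^ 2 / (y ^ 2 * (1 + |Real.log y|) ^ 2) * y)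
          ≤ C * ((∫ y in Set.Ioc (1:ℝ) 2, (v y) ^ 2 * y)
              + ∫ y in Set.Ioc (0:ℝ) R, (deriv v y) ^ 2 * y) := by
  refine ⟨8, by norm_num, fun R hR v hv hkinetic => ?_⟩
  have hderiv : ∀ y ∈ Ioi (0 : ℝ), HasDerivAt v (deriv v y) y := fun y hy =>
    ((hv.differentiableOn one_ne_zero).differentiableAt (isOpen_Ioi.mem_nhds hy)).hasDerivAt
  have hderiv_cont : ContinuousOn (deriv v) (Ioi 0) :=
    hv.continuousOn_deriv_of_isOpen isOpen_Ioi le_rfl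
  have hsub : Icc (1 : ℝ) 2 ⊆ Ioi 0 := fun y hy => one_pos.trans_le hy.1
  have hweighted := setIntegral_Ioc_zero_sq_div_sq_mul_one_add_abs_log_sq_le (by linarith)
    (fun y hy => hderiv y hy.1) (hderiv_cont.mono Ioc_subset_Ioi_self)
    (hkinetic.mono_set Ioc_subset_Ioi_self)
  have hanchor := sq_one_le_setIntegral_Ioc_one_two (fun y hy => hderiv y (hsub hy))
    (hderiv_cont.mono hsub)
  have hkinetic_12 := setIntegral_mono_set (hkinetic.mono_set Ioc_subset_Ioi_self)
    (ae_restrict_of_forall_mem measurableSet_Ioc fun y hy => by have := hy.1; positivity)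
    (Ioc_subset_Ioc zero_le_one hR.le).eventuallyLE
  linarith
end

section
/- (Weighted logarithmic Hardy inequality with sharp constant.) For every γ > 0 there exists a constant C_γ > 0 such that for every R > 2 and every C¹ function v on (0,∞) for which the right-hand side is finite: (γ²/4)·∫₁^R |v(y)|²/(y^{2+γ}(1+log y)²) · y dy ≤ C_γ·∫₁² |v(y)|² y dy + ∫₁^R |v'(y)|²/(y^{γ}(1+log y)²) · y dy. -/
open MeasureTheory Real Set

/-!
Write `W y = y ^ γ * (1 + log y) ^ 2`. On `[2, R]` the inequality holds pointwise up to an exact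
derivative: for `F = -(γ / 2) v² / W`,
`v'² y / W + F' - (γ² / 4) v² y / (y² W) = ((y v' - (γ / 2) v)² (1 + log y) + γ v²) / (y W L)`
with `L = 1 + log y`, which is nonnegative. Integrating leaves the boundary term `(γ / 2) v(2)²`.
The trace inequality `v(2)² ≤ (1 + ε) ∫₁² v² + ε⁻¹ ∫₁² v'²`, with `ε = 2 γ 2^γ` chosen so that
`(γ / 2) ε⁻¹ ∫₁² v'²` is dominated by the derivative term of the right-hand side over `[1, 2]`,
controls it. On `[1, 2]` the left-hand integrand is at most `v² y`.
-/

lemma continuousOn_rpow_mul_one_add_log_sq (c : ℝ) :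
    ContinuousOn (fun y : ℝ => y ^ c * (1 + log y) ^ 2) (Ioi 0) :=
  (continuousOn_id.rpow_const fun _ hy => Or.inl (ne_of_gt hy)).mul
    ((continuousOn_const.add (continuousOn_log.mono fun _ hy => ne_of_gt hy)).pow 2)

lemma one_le_rpow_mul_one_add_log_sq {c y : ℝ} (hc : 0 ≤ c) (hy : 1 ≤ y) :
    1 ≤ y ^ c * (1 + log y) ^ 2 := by
  have hlog : 0 ≤ log y := log_nonneg hy
  have hyc : 1 ≤ y ^ c := one_le_rpow hy hc
  nlinarith

lemma rpow_mul_one_add_log_sq_pos (c : ℝ) {y : ℝ} (hy : 1 ≤ y) : 0 < y ^ c * (1 + log y) ^ 2 := by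
  have := log_nonneg hy
  positivity

lemma rpow_mul_one_add_log_sq_le {γ y : ℝ} (hγ : 0 ≤ γ) (hy₁ : 1 ≤ y) (hy₂ : y ≤ 2) :
    y ^ γ * (1 + log y) ^ 2 ≤ 2 ^ γ * 4 := by
  have hlog₀ : 0 ≤ log y := log_nonneg hy₁
  have hlog₁ : log y ≤ 1 :=
    (log_le_log (by linarith) hy₂).trans (by linarith [log_two_lt_d9])
  have hL : (1 + log y) ^ 2 ≤ 4 := by nlinarith
  exact mul_le_mul (rpow_le_rpow (by linarith) hy₂ hγ) hL (by positivity) (by positivity)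

lemma continuousOn_sq_div_rpow_mul_one_add_log_sq {f : ℝ → ℝ} {s : Set ℝ} (c : ℝ)
    (hs : s ⊆ Ici 1) (hf : ContinuousOn f s) :
    ContinuousOn (fun y => f y ^ 2 / (y ^ c * (1 + log y) ^ 2) * y) s := by
  have hpos : s ⊆ Ioi 0 := fun y hy => show (0:ℝ) < y from zero_lt_one.trans_le (hs hy)
  exact ((hf.pow 2).div ((continuousOn_rpow_mul_one_add_log_sq c).mono hpos) fun y hy =>
    (rpow_mul_one_add_log_sq_pos c (hs hy)).ne').mul continuousOn_id

lemma integral_sq_div_rpow_mul_one_add_log_sq_le {a b c : ℝ} {v : ℝ → ℝ} (hc : 0 ≤ c)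
    (ha : 1 ≤ a) (hab : a ≤ b) (hv : ContinuousOn v (Icc a b)) :
    ∫ y in a..b, v y ^ 2 / (y ^ c * (1 + log y) ^ 2) * y ≤ ∫ y in a..b, v y ^ 2 * y := by
  have hs : Icc a b ⊆ Ici 1 := fun y hy => ha.trans hy.1
  refine intervalIntegral.integral_mono_on hab
    ((continuousOn_sq_div_rpow_mul_one_add_log_sq c hs hv).intervalIntegrable_of_Icc hab)
    (((hv.pow 2).mul continuousOn_id).intervalIntegrable_of_Icc hab) fun y hy => ?_
  have hy : 1 ≤ y := hs hy
  gcongr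
  exact div_le_self (sq_nonneg _) (one_le_rpow_mul_one_add_log_sq hc hy)

noncomputable def hardyPotential (γ : ℝ) (v : ℝ → ℝ) (y : ℝ) : ℝ :=
  -(γ / 2) * v y ^ 2 / (y ^ γ * (1 + log y) ^ 2)

lemma hasDerivAt_hardyPotential {γ y x' : ℝ} {v : ℝ → ℝ} (hv : HasDerivAt v x' y) (hy : 0 < y)
    (hL : 1 + log y ≠ 0) :
    HasDerivAt (hardyPotential γ v)
      (γ * v y / (y ^ γ * (1 + log y) ^ 2) * ((γ / 2 + 1 / (1 + log y)) * v y / y - x')) y := by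
  have hW : HasDerivAt (fun y => y ^ γ * (1 + log y) ^ 2)
      (γ * y ^ (γ - 1) * (1 + log y) ^ 2 + y ^ γ * ((2:ℕ) * (1 + log y) ^ 1 * y⁻¹)) y :=
    (hasDerivAt_rpow_const (Or.inl hy.ne')).mul (((hasDerivAt_log hy.ne').const_add 1).pow 2)
  have hWne : y ^ γ * (1 + log y) ^ 2 ≠ 0 := by positivity
  refine ((hv.pow 2).const_mul (-(γ / 2))).div hW hWne |>.congr_deriv ?_
  rw [rpow_sub hy, rpow_one]
  have := (rpow_pos_of_pos hy γ).ne'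
  simp only [Pi.pow_apply]
  field_simp
  ring

lemma hardy_integrand_sub_le {γ y : ℝ} (hγ : 0 ≤ γ) (hy : 0 < y) (hL : 0 < 1 + log y) (x x' : ℝ) :
    γ ^ 2 / 4 * (x ^ 2 / (y ^ (2 + γ) * (1 + log y) ^ 2) * y)
        - x' ^ 2 / (y ^ γ * (1 + log y) ^ 2) * y
      ≤ γ * x / (y ^ γ * (1 + log y) ^ 2) * ((γ / 2 + 1 / (1 + log y)) * x / y - x') := by
  have hyγ : 0 < y ^ γ := rpow_pos_of_pos hy γ
  rw [rpow_add hy, rpow_two, ← sub_nonneg]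
  have key : γ * x / (y ^ γ * (1 + log y) ^ 2) * ((γ / 2 + 1 / (1 + log y)) * x / y - x')
      - (γ ^ 2 / 4 * (x ^ 2 / (y ^ 2 * y ^ γ * (1 + log y) ^ 2) * y)
        - x' ^ 2 / (y ^ γ * (1 + log y) ^ 2) * y)
      = ((y * x' - γ / 2 * x) ^ 2 * (1 + log y) + γ * x ^ 2) / (y * y ^ γ * (1 + log y) ^ 3) := by
    field_simp
    ring
  rw [key]
  positivity

theorem weighted_log_hardy_of_one_le {γ a b : ℝ} {v v' : ℝ → ℝ} (hγ : 0 ≤ γ) (ha : 1 ≤ a)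
    (hab : a ≤ b) (hv : ContinuousOn v (Icc a b)) (hv' : ∀ y ∈ Ioo a b, HasDerivAt v (v' y) y)
    (hv'c : ContinuousOn v' (Icc a b)) :
    γ ^ 2 / 4 * ∫ y in a..b, v y ^ 2 / (y ^ (2 + γ) * (1 + log y) ^ 2) * y
      ≤ (∫ y in a..b, v' y ^ 2 / (y ^ γ * (1 + log y) ^ 2) * y) + γ / 2 * v a ^ 2 := by
  have hs : Icc a b ⊆ Ici 1 := fun y hy => ha.trans hy.1
  have hA := continuousOn_sq_div_rpow_mul_one_add_log_sq (2 + γ) hs hv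
  have hB := continuousOn_sq_div_rpow_mul_one_add_log_sq γ hs hv'c
  have hφ : ContinuousOn (fun y => γ ^ 2 / 4 * (v y ^ 2 / (y ^ (2 + γ) * (1 + log y) ^ 2) * y)
      - v' y ^ 2 / (y ^ γ * (1 + log y) ^ 2) * y) (Icc a b) := (continuousOn_const.mul hA).sub hB
  have hF : ContinuousOn (hardyPotential γ v) (Icc a b) :=
    (continuousOn_const.mul (hv.pow 2)).div
      ((continuousOn_rpow_mul_one_add_log_sq γ).mono fun y hy =>
        show (0:ℝ) < y from zero_lt_one.trans_le (hs hy))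
      fun y hy => (rpow_mul_one_add_log_sq_pos γ (hs hy)).ne'
  have hFTC := intervalIntegral.integral_le_sub_of_hasDeriv_right_of_le hab hF
    (fun y hy => (hasDerivAt_hardyPotential (hv' y hy) (by linarith [hy.1])
      (by linarith [log_nonneg (ha.trans hy.1.le)])).hasDerivWithinAt)
    hφ.integrableOn_Icc
    (fun y hy => hardy_integrand_sub_le hγ (by linarith [hy.1])
      (by linarith [log_nonneg (ha.trans hy.1.le)]) _ _)
  have hFb : hardyPotential γ v b ≤ 0 := by
    have := rpow_mul_one_add_log_sq_pos γ (ha.trans hab)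
    unfold hardyPotential
    apply div_nonpos_of_nonpos_of_nonneg <;> nlinarith [sq_nonneg (v b)]
  have hFa : -hardyPotential γ v a ≤ γ / 2 * v a ^ 2 := by
    rw [hardyPotential, neg_mul, neg_div, neg_neg]
    exact div_le_self (by positivity) (one_le_rpow_mul_one_add_log_sq hγ ha)
  rw [intervalIntegral.integral_sub ((hA.intervalIntegrable_of_Icc hab).const_mul _)
    (hB.intervalIntegrable_of_Icc hab), intervalIntegral.integral_const_mul] at hFTC
  linarith

theorem sq_le_integral_sq_add_integral_deriv_sq {a b ε : ℝ} {v v' : ℝ → ℝ} (hab : a < b)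
    (hε : 0 < ε) (hv : ContinuousOn v (Icc a b)) (hv' : ∀ y ∈ Ioo a b, HasDerivAt v (v' y) y)
    (hv'c : ContinuousOn v' (Icc a b)) :
    v b ^ 2 ≤ ((b - a)⁻¹ + ε) * (∫ y in a..b, v y ^ 2) + ε⁻¹ * ∫ y in a..b, v' y ^ 2 := by
  have hba : 0 < b - a := sub_pos.mpr hab
  have hg : ContinuousOn (fun y => (y - a) / (b - a) * v y ^ 2) (Icc a b) :=
    ((continuousOn_id.sub continuousOn_const).div_const _).mul (hv.pow 2)
  have hg' : ∀ y ∈ Ioo a b, HasDerivAt (fun y => (y - a) / (b - a) * v y ^ 2)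
      ((b - a)⁻¹ * v y ^ 2 + (y - a) / (b - a) * (2 * v y * v' y)) y := fun y hy => by
    refine ((((hasDerivAt_id y).sub_const a).div_const (b - a)).mul
      ((hv' y hy).pow 2)).congr_deriv ?_
    simp only [id_eq, Pi.pow_apply]
    push_cast
    ring
  have hle : ∀ y ∈ Ioo a b, (b - a)⁻¹ * v y ^ 2 + (y - a) / (b - a) * (2 * v y * v' y)
      ≤ ((b - a)⁻¹ + ε) * v y ^ 2 + ε⁻¹ * v' y ^ 2 := fun y hy => by
    have ht₀ : 0 ≤ (y - a) / (b - a) := div_nonneg (by linarith [hy.1]) hba.le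
    have ht₁ : (y - a) / (b - a) ≤ 1 := (div_le_one hba).mpr (by linarith [hy.2])
    have hAM := two_mul_le_add_mul_sq (a := v y) (b := v' y) hε
    have hR : 0 ≤ ε * v y ^ 2 + ε⁻¹ * v' y ^ 2 := by positivity
    nlinarith [mul_le_mul_of_nonneg_left hAM ht₀, mul_le_of_le_one_left hR ht₁]
  have hv2 : IntervalIntegrable (fun y => v y ^ 2) volume a b :=
    (hv.pow 2).intervalIntegrable_of_Icc hab.le
  have hv'2 : IntervalIntegrable (fun y => v' y ^ 2) volume a b :=
    (hv'c.pow 2).intervalIntegrable_of_Icc hab.le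
  have hFTC := intervalIntegral.sub_le_integral_of_hasDeriv_right_of_le hab.le hg
    (φ := fun y => ((b - a)⁻¹ + ε) * v y ^ 2 + ε⁻¹ * v' y ^ 2)
    (fun y hy => (hg' y hy).hasDerivWithinAt)
    ((continuousOn_const.mul (hv.pow 2)).add (continuousOn_const.mul (hv'c.pow 2))).integrableOn_Icc
    hle
  rw [intervalIntegral.integral_add (hv2.const_mul _) (hv'2.const_mul _),
    intervalIntegral.integral_const_mul, intervalIntegral.integral_const_mul] at hFTC
  simpa [div_self hba.ne'] using hFTC

lemma half_mul_sq_two_le_weighted_integrals {γ : ℝ} {v v' : ℝ → ℝ} (hγ : 0 < γ)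
    (hv : ContinuousOn v (Icc 1 2)) (hv' : ∀ y ∈ Ioo 1 2, HasDerivAt v (v' y) y)
    (hv'c : ContinuousOn v' (Icc 1 2)) :
    γ / 2 * v 2 ^ 2 ≤ γ / 2 * (1 + 2 * γ * 2 ^ γ) * (∫ y in (1:ℝ)..2, v y ^ 2 * y)
      + ∫ y in (1:ℝ)..2, v' y ^ 2 / (y ^ γ * (1 + log y) ^ 2) * y := by
  have h2γ : 0 < (2:ℝ) ^ γ := by positivity
  set ε := 2 * γ * (2:ℝ) ^ γ with hε
  have htrace := sq_le_integral_sq_add_integral_deriv_sq one_lt_two (by positivity) hv hv' hv'c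
    (ε := ε)
  have hv2 : ∫ y in (1:ℝ)..2, v y ^ 2 ≤ ∫ y in (1:ℝ)..2, v y ^ 2 * y :=
    intervalIntegral.integral_mono_on one_le_two ((hv.pow 2).intervalIntegrable_of_Icc one_le_two)
      (((hv.pow 2).mul continuousOn_id).intervalIntegrable_of_Icc one_le_two)
      fun y hy => le_mul_of_one_le_right (sq_nonneg _) hy.1
  have hv'2 : ∫ y in (1:ℝ)..2, v' y ^ 2
      ≤ 2 ^ γ * 4 * ∫ y in (1:ℝ)..2, v' y ^ 2 / (y ^ γ * (1 + log y) ^ 2) * y := by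
    have hB := continuousOn_sq_div_rpow_mul_one_add_log_sq γ (fun y hy => hy.1) hv'c
    rw [← intervalIntegral.integral_const_mul]
    refine intervalIntegral.integral_mono_on one_le_two
      ((hv'c.pow 2).intervalIntegrable_of_Icc one_le_two)
      ((hB.intervalIntegrable_of_Icc one_le_two).const_mul _) fun y hy => ?_
    have hW := rpow_mul_one_add_log_sq_pos γ hy.1
    rw [div_mul_eq_mul_div, mul_div_assoc', le_div_iff₀ hW]
    nlinarith [mul_le_mul_of_nonneg_left (rpow_mul_one_add_log_sq_le hγ.le hy.1 hy.2)
      (sq_nonneg (v' y)), mul_nonneg (mul_nonneg h2γ.le (sq_nonneg (v' y))) (sub_nonneg.2 hy.1)]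
  have hcoef : γ / 2 * ε⁻¹ * (2 ^ γ * 4) = 1 := by
    rw [hε]
    field_simp
    ring
  rw [show (2:ℝ) - 1 = 1 by norm_num, inv_one] at htrace
  calc γ / 2 * v 2 ^ 2
      ≤ γ / 2 * ((1 + ε) * (∫ y in (1:ℝ)..2, v y ^ 2) + ε⁻¹ * ∫ y in (1:ℝ)..2, v' y ^ 2) := by
        gcongr
    _ ≤ γ / 2 * ((1 + ε) * (∫ y in (1:ℝ)..2, v y ^ 2 * y)
          + ε⁻¹ * (2 ^ γ * 4 * ∫ y in (1:ℝ)..2, v' y ^ 2 / (y ^ γ * (1 + log y) ^ 2) * y)) := by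
        gcongr
    _ = _ := by
        linear_combination (∫ y in (1:ℝ)..2, v' y ^ 2 / (y ^ γ * (1 + log y) ^ 2) * y) * hcoef

theorem weighted_log_hardy_intervalIntegral {γ R : ℝ} {v v' : ℝ → ℝ} (hγ : 0 < γ) (hR : 2 ≤ R)
    (hv : ContinuousOn v (Icc 1 R)) (hv' : ∀ y ∈ Ioo 1 R, HasDerivAt v (v' y) y)
    (hv'c : ContinuousOn v' (Icc 1 R)) :
    γ ^ 2 / 4 * ∫ y in (1:ℝ)..R, v y ^ 2 / (y ^ (2 + γ) * (1 + log y) ^ 2) * y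
      ≤ (γ ^ 2 / 4 + γ / 2 * (1 + 2 * γ * 2 ^ γ)) * (∫ y in (1:ℝ)..2, v y ^ 2 * y)
        + ∫ y in (1:ℝ)..R, v' y ^ 2 / (y ^ γ * (1 + log y) ^ 2) * y := by
  have h₁₂ : Icc 1 2 ⊆ Icc 1 R := Icc_subset_Icc_right hR
  have h₂R : Icc 2 R ⊆ Icc 1 R := Icc_subset_Icc_left one_le_two
  have hA := continuousOn_sq_div_rpow_mul_one_add_log_sq (2 + γ) (fun y hy => hy.1) hv
  have hB := continuousOn_sq_div_rpow_mul_one_add_log_sq γ (fun y hy => hy.1) hv'c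
  rw [← intervalIntegral.integral_add_adjacent_intervals
      ((hA.mono h₁₂).intervalIntegrable_of_Icc one_le_two)
      ((hA.mono h₂R).intervalIntegrable_of_Icc hR),
    ← intervalIntegral.integral_add_adjacent_intervals
      ((hB.mono h₁₂).intervalIntegrable_of_Icc one_le_two)
      ((hB.mono h₂R).intervalIntegrable_of_Icc hR)]
  have hnear := integral_sq_div_rpow_mul_one_add_log_sq_le (c := 2 + γ) (by positivity) le_rfl
    one_le_two (hv.mono h₁₂)
  have htrace := half_mul_sq_two_le_weighted_integrals hγ (hv.mono h₁₂)
    (fun y hy => hv' y (Ioo_subset_Ioo_right hR hy)) (hv'c.mono h₁₂)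
  have hfar := weighted_log_hardy_of_one_le hγ.le one_le_two hR (hv.mono h₂R)
    (fun y hy => hv' y (Ioo_subset_Ioo_left one_le_two hy)) (hv'c.mono h₂R)
  linear_combination (γ ^ 2 / 4) * hnear + htrace + hfar

/-- Weighted logarithmic Hardy inequality with sharp constant: for every `γ > 0` there is
`C_γ > 0` such that for every `R > 2` and every `C¹` function `v` on `(0,∞)`,
`(γ²/4) ∫₁^R v²/(y^{2+γ}(1+log y)²) y dy
  ≤ C_γ ∫₁² v² y dy + ∫₁^R (v')²/(y^γ(1+log y)²) y dy`. -/
theorem weighted_log_hardy_inequality :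
    ∀ γ : ℝ, 0 < γ →
      ∃ C : ℝ, 0 < C ∧
        ∀ R : ℝ, 2 < R → ∀ v : ℝ → ℝ,
          ContDiffOn ℝ 1 v (Set.Ioi 0) →
          γ ^ 2 / 4 *
              (∫ y in Set.Ioc (1:ℝ) R,
                (v y) ^ 2 / (y ^ (2 + γ) * (1 + Real.log y) ^ 2) * y)
            ≤ C * (∫ y in Set.Ioc (1:ℝ) 2, (v y) ^ 2 * y)
              + ∫ y in Set.Ioc (1:ℝ) R,
                  (deriv v y) ^ 2 / (y ^ γ * (1 + Real.log y) ^ 2) * y := by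
  intro γ hγ
  refine ⟨γ ^ 2 / 4 + γ / 2 * (1 + 2 * γ * 2 ^ γ), by positivity, fun R hR v hv => ?_⟩
  have hpos : Icc 1 R ⊆ Ioi (0:ℝ) := fun y hy => zero_lt_one.trans_le hy.1
  have hderiv : ∀ y ∈ Ioo 1 R, HasDerivAt v (deriv v y) y := fun y hy =>
    ((hv.differentiableOn one_ne_zero).differentiableAt
      (isOpen_Ioi.mem_nhds (hpos (Ioo_subset_Icc_self hy)))).hasDerivAt
  rw [← intervalIntegral.integral_of_le (one_le_two.trans hR.le),
    ← intervalIntegral.integral_of_le (one_le_two.trans hR.le),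
    ← intervalIntegral.integral_of_le one_le_two]
  exact weighted_log_hardy_intervalIntegral hγ hR.le (hv.continuousOn.mono hpos) hderiv
    ((hv.continuousOn_deriv_of_isOpen isOpen_Ioi le_rfl).mono hpos)
end

section
/- There exists a universal constant C > 0 such that for every R > 2 and every radially symmetric v ∈ Ḣ¹(ℝ²), represented by a C¹ function v of the radial variable y: ∫₀^R |v(y)|² y dy ≤ C·R²·( ∫₀² |v(y)|² y dy + (log R)·∫₀^R |v'(y)|² y dy ). -/
/-!
Pick `a ∈ [1, 2]` minimising `v(y)² y` there, so that `v(a)² ≤ ∫₀² v² y dy`. Cauchy–Schwarz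
against the weights `t` and `1 / t` gives `(v(y) - v(a))² ≤ |log y - log a| ∫ (v')² t dt`, and on
`(0, R]` we have `|log y - log a| y ≤ y log R + 2` (for `y < a` use `log (a / y) ≤ a / y - 1`).
Integrating `v(y)² y ≤ 2 v(a)² y + 2 (v(y) - v(a))² y` over `(0, R]` yields the claim with
`C = 4`, since `4R ≤ 3 R² log R` for `R > 2`.
-/

open MeasureTheory Real Set
open scoped Interval

theorem sq_integral_mul_le_of_nonneg {α : Type*} [MeasurableSpace α] {μ : Measure α}
    {f g : α → ℝ} (hf₀ : 0 ≤ᵐ[μ] f) (hg₀ : 0 ≤ᵐ[μ] g) (hf : MemLp f 2 μ) (hg : MemLp g 2 μ) :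
    (∫ a, f a * g a ∂μ) ^ 2 ≤ (∫ a, f a ^ 2 ∂μ) * ∫ a, g a ^ 2 ∂μ := by
  have holder := integral_mul_le_Lp_mul_Lq_of_nonneg Real.HolderConjugate.two_two hf₀ hg₀
    (by simpa using hf) (by simpa using hg)
  simp only [Real.rpow_two] at holder
  have sq_rpow_half : ∀ x : ℝ, 0 ≤ x → (x ^ (1 / 2 : ℝ)) ^ 2 = x := fun x hx => by
    rw [← Real.sqrt_eq_rpow, Real.sq_sqrt hx]
  have hfg₀ : 0 ≤ ∫ a, f a * g a ∂μ :=
    integral_nonneg_of_ae (by filter_upwards [hf₀, hg₀] with a ha hb using mul_nonneg ha hb)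
  calc (∫ a, f a * g a ∂μ) ^ 2
      ≤ ((∫ a, f a ^ 2 ∂μ) ^ (1 / 2 : ℝ) * (∫ a, g a ^ 2 ∂μ) ^ (1 / 2 : ℝ)) ^ 2 :=
        pow_le_pow_left₀ hfg₀ holder 2
    _ = (∫ a, f a ^ 2 ∂μ) * ∫ a, g a ^ 2 ∂μ := by
      rw [mul_pow, sq_rpow_half _ (integral_nonneg fun a => sq_nonneg _),
        sq_rpow_half _ (integral_nonneg fun a => sq_nonneg _)]

theorem abs_log_sub_log_mul_le {R a y : ℝ} (hR : 1 ≤ R) (ha₁ : 1 ≤ a) (ha₂ : a ≤ 2)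
    (hy₀ : 0 < y) (hyR : y ≤ R) : |log y - log a| * y ≤ log R * y + 2 := by
  have ha : 0 < a := one_pos.trans_le ha₁
  rcases le_total a y with hay | hya
  · rw [abs_of_nonneg (sub_nonneg.mpr (log_le_log ha hay))]
    have : log y - log a ≤ log R := by linarith [log_le_log hy₀ hyR, log_nonneg ha₁]
    nlinarith
  · rw [abs_of_nonpos (sub_nonpos.mpr (log_le_log hy₀ hya)), neg_sub, ← log_div ha.ne' hy₀.ne']
    have hlog := log_le_sub_one_of_pos (div_pos ha hy₀)
    have : log (a / y) * y ≤ a - y := by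
      calc log (a / y) * y ≤ (a / y - 1) * y := by gcongr
        _ = a - y := by field_simp
    nlinarith [log_nonneg hR]

theorem exists_mem_Icc_mul_le_setIntegral {g : ℝ → ℝ} {a b : ℝ} (hab : a ≤ b)
    (hg : ContinuousOn g (Icc a b)) : ∃ c ∈ Icc a b, g c * (b - a) ≤ ∫ t in Ioc a b, g t := by
  obtain ⟨c, hc, hmin⟩ := isCompact_Icc.exists_isMinOn (nonempty_Icc.mpr hab) hg
  refine ⟨c, hc, ?_⟩
  simpa [volume_real_Ioc_of_le hab] using setIntegral_ge_of_const_le_real measurableSet_Ioc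
    (by simp : volume (Ioc a b) ≠ ⊤) (fun t ht => hmin (Ioc_subset_Icc_self ht))
    (hg.integrableOn_Icc.mono_set Ioc_subset_Icc_self)

section

variable {v : ℝ → ℝ}

theorem abs_sub_le_setIntegral_abs_deriv (hv : ContDiffOn ℝ 1 v (Ioi 0)) {c d : ℝ}
    (hc : 0 < c) (hcd : c ≤ d) : |v d - v c| ≤ ∫ t in Ioc c d, |deriv v t| := by
  have hIcc : Icc c d ⊆ Ioi 0 := fun x hx => hc.trans_le hx.1
  have hftc : ∫ t in c..d, deriv v t = v d - v c := by
    refine intervalIntegral.integral_deriv_eq_sub (fun x hx => ?_) ?_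
    · rw [uIcc_of_le hcd] at hx
      exact (hv.differentiableOn one_ne_zero).differentiableAt (isOpen_Ioi.mem_nhds (hIcc hx))
    · exact ((hv.continuousOn_deriv_of_isOpen isOpen_Ioi le_rfl).mono
        (by rwa [uIcc_of_le hcd])).intervalIntegrable
  rw [← hftc, intervalIntegral.integral_of_le hcd]
  exact abs_integral_le_integral_abs

theorem sq_sub_le_log_mul_setIntegral (hv : ContDiffOn ℝ 1 v (Ioi 0)) {c d : ℝ}
    (hc : 0 < c) (hcd : c ≤ d) :
    (v d - v c) ^ 2 ≤ (log d - log c) * ∫ t in Ioc c d, deriv v t ^ 2 * t := by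
  have hIcc : Icc c d ⊆ Ioi 0 := fun x hx => hc.trans_le hx.1
  have hpos : ∀ t ∈ Ioc c d, 0 < t := fun t ht => hc.trans ht.1
  set f : ℝ → ℝ := fun t => |deriv v t| * √t
  set g : ℝ → ℝ := fun t => (√t)⁻¹
  have hf : ContinuousOn f (Icc c d) :=
    ((hv.continuousOn_deriv_of_isOpen isOpen_Ioi le_rfl).mono hIcc).abs.mul
      continuous_sqrt.continuousOn
  have hg : ContinuousOn g (Icc c d) :=
    continuous_sqrt.continuousOn.inv₀ fun t ht => (sqrt_pos.mpr (hIcc ht)).ne'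
  have memLp_two {h : ℝ → ℝ} (hh : ContinuousOn h (Icc c d)) :
      MemLp h 2 (volume.restrict (Ioc c d)) :=
    (memLp_two_iff_integrable_sq ((hh.mono Ioc_subset_Icc_self).aestronglyMeasurable
      measurableSet_Ioc)).mpr ((hh.pow 2).integrableOn_Icc.mono_set Ioc_subset_Icc_self)
  have cs := sq_integral_mul_le_of_nonneg (μ := volume.restrict (Ioc c d))
    (ae_of_all _ fun t => mul_nonneg (abs_nonneg _) (sqrt_nonneg t))
    (ae_of_all _ fun t => inv_nonneg.mpr (sqrt_nonneg t)) (memLp_two hf) (memLp_two hg)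
  have hfg : ∫ t in Ioc c d, f t * g t = ∫ t in Ioc c d, |deriv v t| :=
    setIntegral_congr_fun measurableSet_Ioc fun t ht => by
      simp [f, g, (sqrt_pos.mpr (hpos t ht)).ne']
  have hf2 : ∫ t in Ioc c d, f t ^ 2 = ∫ t in Ioc c d, deriv v t ^ 2 * t :=
    setIntegral_congr_fun measurableSet_Ioc fun t ht => by
      simp [f, mul_pow, sq_sqrt (hpos t ht).le]
  have hg2 : ∫ t in Ioc c d, g t ^ 2 = log d - log c := by
    rw [setIntegral_congr_fun (g := fun t => t⁻¹) measurableSet_Ioc fun t ht => by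
        simp [g, inv_pow, sq_sqrt (hpos t ht).le], ← intervalIntegral.integral_of_le hcd,
      integral_inv_of_pos hc (hc.trans_le hcd), log_div (hc.trans_le hcd).ne' hc.ne']
  rw [hfg, hf2, hg2] at cs
  calc (v d - v c) ^ 2 = |v d - v c| ^ 2 := (sq_abs _).symm
    _ ≤ (∫ t in Ioc c d, |deriv v t|) ^ 2 :=
      pow_le_pow_left₀ (abs_nonneg _) (abs_sub_le_setIntegral_abs_deriv hv hc hcd) 2
    _ ≤ _ := by linarith

theorem sq_sub_le_abs_log_sub_mul_setIntegral_uIoc (hv : ContDiffOn ℝ 1 v (Ioi 0)) {a x : ℝ}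
    (ha : 0 < a) (hx : 0 < x) :
    (v x - v a) ^ 2 ≤ |log x - log a| * ∫ t in Ι a x, deriv v t ^ 2 * t := by
  rcases le_total a x with hax | hxa
  · rw [uIoc_of_le hax, abs_of_nonneg (sub_nonneg.mpr (log_le_log ha hax))]
    exact sq_sub_le_log_mul_setIntegral hv ha hax
  · rw [uIoc_of_ge hxa, abs_of_nonpos (sub_nonpos.mpr (log_le_log hx hxa)), neg_sub,
      ← neg_sub, neg_sq]
    exact sq_sub_le_log_mul_setIntegral hv hx hxa

theorem sq_mul_le_of_mem_Ioc (hv : ContDiffOn ℝ 1 v (Ioi 0)) {R a y : ℝ} (hR : 2 ≤ R)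
    (hD : IntegrableOn (fun t => deriv v t ^ 2 * t) (Ioc 0 R)) (ha₁ : 1 ≤ a) (ha₂ : a ≤ 2)
    (hy : y ∈ Ioc 0 R) :
    v y ^ 2 * y ≤
      2 * v a ^ 2 * y + 2 * (log R * y + 2) * ∫ t in Ioc 0 R, deriv v t ^ 2 * t := by
  have ha : 0 < a := one_pos.trans_le ha₁
  have hsub : Ι a y ⊆ Ioc 0 R := Ioc_subset_Ioc (le_min ha.le hy.1.le) (max_le (by linarith) hy.2)
  have hI₀ : 0 ≤ ∫ t in Ι a y, deriv v t ^ 2 * t :=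
    setIntegral_nonneg measurableSet_uIoc fun t ht =>
      mul_nonneg (sq_nonneg _) (hsub ht).1.le
  have hI : ∫ t in Ι a y, deriv v t ^ 2 * t ≤ ∫ t in Ioc 0 R, deriv v t ^ 2 * t :=
    setIntegral_mono_set hD (ae_restrict_of_forall_mem measurableSet_Ioc fun t ht =>
      mul_nonneg (sq_nonneg _) ht.1.le) hsub.eventuallyLE
  have hlog := abs_log_sub_log_mul_le (by linarith) ha₁ ha₂ hy.1 hy.2
  calc v y ^ 2 * y ≤ (2 * v a ^ 2 + 2 * (v y - v a) ^ 2) * y := by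
        gcongr ?_ * y
        · exact hy.1.le
        nlinarith [sq_nonneg (v y - 2 * v a)]
    _ ≤ (2 * v a ^ 2 + 2 * (|log y - log a| * ∫ t in Ι a y, deriv v t ^ 2 * t)) * y := by
        gcongr
        · exact hy.1.le
        exact sq_sub_le_abs_log_sub_mul_setIntegral_uIoc hv ha hy.1
    _ = 2 * v a ^ 2 * y + 2 * (|log y - log a| * y) * ∫ t in Ι a y, deriv v t ^ 2 * t := by
        ring
    _ ≤ _ := by
        gcongr
        nlinarith [log_nonneg (by linarith : (1:ℝ) ≤ R), hy.1]

theorem setIntegral_sq_mul_le (hv : ContDiffOn ℝ 1 v (Ioi 0)) {R : ℝ} (hR : 2 ≤ R)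
    (hD : IntegrableOn (fun t => deriv v t ^ 2 * t) (Ioc 0 R))
    (hI : IntegrableOn (fun y => v y ^ 2 * y) (Ioc 0 R)) :
    ∫ y in Ioc 0 R, v y ^ 2 * y ≤
      ((∫ y in Ioc 0 2, v y ^ 2 * y) + log R * ∫ t in Ioc 0 R, deriv v t ^ 2 * t) * R ^ 2
        + 4 * (∫ t in Ioc 0 R, deriv v t ^ 2 * t) * R := by
  set D := ∫ t in Ioc 0 R, deriv v t ^ 2 * t
  obtain ⟨a, ⟨ha₁, ha₂⟩, ha⟩ := exists_mem_Icc_mul_le_setIntegral one_le_two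
    (((hv.continuousOn.mono fun t ht => one_pos.trans_le ht.1).pow 2).mul continuousOn_id)
  have hva : v a ^ 2 ≤ ∫ y in Ioc 0 2, v y ^ 2 * y :=
    calc v a ^ 2 ≤ v a ^ 2 * a * (2 - 1) := by nlinarith [sq_nonneg (v a)]
      _ ≤ ∫ y in Ioc 1 2, v y ^ 2 * y := ha
      _ ≤ ∫ y in Ioc 0 2, v y ^ 2 * y :=
        setIntegral_mono_set (hI.mono_set (Ioc_subset_Ioc_right hR))
          (ae_restrict_of_forall_mem measurableSet_Ioc fun t ht =>
            mul_nonneg (sq_nonneg _) ht.1.le)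
          (Ioc_subset_Ioc_left zero_le_one).eventuallyLE
  have hlinear : ∫ y in Ioc 0 R, (2 * (v a ^ 2 + log R * D) * y + 4 * D) =
      (v a ^ 2 + log R * D) * R ^ 2 + 4 * D * R := by
    rw [← intervalIntegral.integral_of_le (by linarith), intervalIntegral.integral_add
        ((continuous_const_mul _).intervalIntegrable _ _) intervalIntegrable_const,
      intervalIntegral.integral_const_mul, integral_id, intervalIntegral.integral_const,
      smul_eq_mul]
    ring
  calc ∫ y in Ioc 0 R, v y ^ 2 * y
      ≤ ∫ y in Ioc 0 R, (2 * (v a ^ 2 + log R * D) * y + 4 * D) :=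
        setIntegral_mono_on hI (Continuous.integrableOn_Ioc (by fun_prop)) measurableSet_Ioc
          fun y hy => by linarith [sq_mul_le_of_mem_Ioc hv hR hD ha₁ ha₂ hy]
    _ ≤ _ := by
        rw [hlinear]
        gcongr

end

/-- There is a universal `C > 0` such that for every `R > 2` and every radially symmetric
`v ∈ Ḣ¹(ℝ²)`, represented by a `C¹` function of the radial variable,
`∫₀^R v² y dy ≤ C R² (∫₀² v² y dy + log R ∫₀^R (v')² y dy)`. -/
theorem hardy_growth_inequality :
    ∃ C : ℝ, 0 < C ∧
      ∀ R : ℝ, 2 < R → ∀ v : ℝ → ℝ,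
        ContDiffOn ℝ 1 v (Set.Ioi 0) →
        IntegrableOn (fun y => (deriv v y) ^ 2 * y) (Set.Ioi 0) →
        (∫ y in Set.Ioc (0:ℝ) R, (v y) ^ 2 * y)
          ≤ C * R ^ 2 * ((∫ y in Set.Ioc (0:ℝ) 2, (v y) ^ 2 * y)
              + Real.log R * ∫ y in Set.Ioc (0:ℝ) R, (deriv v y) ^ 2 * y) := by
  refine ⟨4, four_pos, fun R hR v hv hD => ?_⟩
  set A := ∫ y in Ioc 0 2, v y ^ 2 * y
  set D := ∫ y in Ioc 0 R, deriv v y ^ 2 * y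
  have hA : 0 ≤ A := setIntegral_nonneg measurableSet_Ioc fun y hy =>
    mul_nonneg (sq_nonneg _) hy.1.le
  have hD₀ : 0 ≤ D := setIntegral_nonneg measurableSet_Ioc fun y hy =>
    mul_nonneg (sq_nonneg _) hy.1.le
  have hlog : 2 / 3 ≤ log R := by
    linarith [log_two_gt_d9, log_le_log two_pos hR.le]
  by_cases hI : IntegrableOn (fun y => v y ^ 2 * y) (Ioc 0 R)
  · calc ∫ y in Ioc 0 R, v y ^ 2 * y ≤ (A + log R * D) * R ^ 2 + 4 * D * R :=
          setIntegral_sq_mul_le hv hR.le (hD.mono_set Ioc_subset_Ioi_self) hI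
      _ ≤ 4 * R ^ 2 * (A + log R * D) := by
          nlinarith [mul_nonneg hA (sq_nonneg R), mul_nonneg hD₀ (sq_nonneg R),
            mul_nonneg (mul_nonneg hD₀ (sq_nonneg R)) (sub_nonneg.mpr hlog),
            mul_nonneg (mul_nonneg hD₀ (by linarith : (0:ℝ) ≤ R)) (sub_nonneg.mpr hR.le)]
  · rw [integral_undef hI]
    positivity
end
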